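/- Let t = (M−1)/2, let h'(j) = h(M−1−j) be the reversed kernel with extended form h'_e, and let Ĥ' be the DFT of h'_e. Suppose y : ZMod N → ℂ satisfies Ŷ(k) = X̂(k) · Ĥ'(k) · exp(2πi·k·t/N) for every k ∈ ZMod N, where X̂, Ŷ are the DFTs of x, y. Then for every n ∈ ZMod N, y(n) = Σ_{j=0}^{M−1} h(j) · x(n − t + j) (indices modulo N); that is, the time-domain convolution corresponding to this modified frequency-domain formula satisfies the symmetric property and its kernel is the original h. -/
import Mathlib


/-- The discrete Fourier transform of a signal `z : ZMod N → ℂ`: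
`Ẑ(k) = Σ_{n=0}^{N−1} z(n) · exp(−2πi·k·n/N)`. -/
noncomputable def dft {N : ℕ} [NeZero N] (z : ZMod N → ℂ) (k : ZMod N) : ℂ :=
  ∑ n : ZMod N,
    z n * Complex.exp (-2 * Real.pi * Complex.I * (k.val : ℂ) * (n.val : ℂ) / (N : ℂ))

lemma dft_eq_zmod {N : ℕ} [NeZero N] (z : ZMod N → ℂ) (k : ZMod N) :
    dft z k = ZMod.dft z k := by
  rw [ZMod.dft_apply, dft]
  refine Finset.sum_congr rfl fun n _ => ?_
  rw [smul_eq_mul, mul_comm]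
  congr 1
  have h1 : (-(n * k) : ZMod N) = ((-((n.val : ℤ) * (k.val : ℤ)) : ℤ) : ZMod N) := by
    push_cast [ZMod.natCast_zmod_val]
    ring
  rw [h1, ZMod.stdAddChar_coe]
  congr 1
  push_cast
  ring

lemma shift_sum {N : ℕ} [NeZero N] (x : ZMod N → ℂ) (k c : ZMod N) :
    (∑ m : ZMod N, ZMod.stdAddChar (-(m * k)) * x (m + c))
      = ZMod.stdAddChar (c * k) * ZMod.dft x k := by
  rw [ZMod.dft_apply, Finset.mul_sum]
  rw [← Equiv.sum_comp (Equiv.subRight c) (fun m => ZMod.stdAddChar (-(m * k)) * x (m + c))]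
  refine Finset.sum_congr rfl fun m _ => ?_
  simp only [Equiv.subRight_apply, sub_add_cancel]
  rw [smul_eq_mul]
  have : (-((m - c) * k)) = c * k + -(m * k) := by ring
  rw [this, AddChar.map_add_eq_mul]
  ring

/-- With `t = (M−1)/2`, reversed kernel `h'(j) = h(M−1−j)` with extended
form `h'_e` and DFT `Ĥ'`, if `Ŷ(k) = X̂(k)·Ĥ'(k)·exp(2πi·k·t/N)` for all `k`, then the
time-domain convolution satisfies the symmetric property with the original kernel:
`y(n) = Σ_j h(j)·x(n−t+j)`. -/
theorem modified_frequency_formula_original_kernel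
    (N M : ℕ) [NeZero N] (hModd : Odd M) (hMN : M < N)
    (x : ZMod N → ℂ) (h : Fin M → ℂ)
    (h' : Fin M → ℂ)
    (hh' : ∀ j : Fin M,
      h' j = h ⟨M - 1 - j.val, by rcases hModd with ⟨c, hc⟩; have := j.isLt; omega⟩)
    (he' : ZMod N → ℂ)
    (hhe' : ∀ n : ZMod N, he' n = if hn : n.val < M then h' ⟨n.val, hn⟩ else 0)
    (t : ℕ) (ht : t = (M - 1) / 2)
    (y : ZMod N → ℂ)
    (hfreq : ∀ k : ZMod N, dft y k = dft x k * dft he' k *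
      Complex.exp (2 * Real.pi * Complex.I * (k.val : ℂ) * (t : ℂ) / (N : ℂ))) :
    ∀ n : ZMod N,
      y n = ∑ j : Fin M, h j * x (n - (t : ZMod N) + ((j.val : ℕ) : ZMod N)) := by
  classical
  obtain ⟨c, hc⟩ := hModd
  have htc : t = c := by omega
  have hM1 : M - 1 = 2 * t := by omega
  set y' : ZMod N → ℂ :=
    fun m => ∑ j : Fin M, h j * x (m - (t : ZMod N) + ((j.val : ℕ) : ZMod N)) with hy'
  suffices hs : y = y' by intro n; rw [hs]
  -- phase factor as a character value
  have hphase : ∀ k : ZMod N,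
      Complex.exp (2 * Real.pi * Complex.I * (k.val : ℂ) * (t : ℂ) / (N : ℂ))
        = ZMod.stdAddChar (k * (t : ZMod N)) := by
    intro k
    have h1 : (k * (t : ZMod N)) = (((k.val : ℤ) * (t : ℤ) : ℤ) : ZMod N) := by
      push_cast [ZMod.natCast_zmod_val]
      ring
    rw [h1, ZMod.stdAddChar_coe]
    congr 1
    push_cast
    ring
  -- DFT of the extended reversed kernel as a finite sum over Fin M
  have hHsum : ∀ k : ZMod N, ZMod.dft he' k
      = ∑ j : Fin M, h' j * ZMod.stdAddChar (-(((j.val : ℕ) : ZMod N) * k)) := by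
    intro k
    rw [ZMod.dft_apply]
    have h0 : ∀ n ∈ (Finset.univ : Finset (ZMod N)),
        ZMod.stdAddChar (-(n * k)) • he' n ≠ 0 → n.val < M := by
      intro n _ hne
      by_contra hcon
      apply hne
      rw [hhe', dif_neg hcon, smul_zero]
    rw [← Finset.sum_filter_of_ne h0]
    refine Finset.sum_bij' (fun n hn => (⟨n.val, by simpa using hn⟩ : Fin M))
      (fun j _ => ((j.val : ℕ) : ZMod N)) ?_ ?_ ?_ ?_ ?_
    · intro a ha; exact Finset.mem_univ _
    · intro j _
      simp only [Finset.mem_filter, Finset.mem_univ, true_and]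
      rw [ZMod.val_natCast_of_lt (lt_trans j.isLt hMN)]
      exact j.isLt
    · intro a ha; exact ZMod.natCast_zmod_val a
    · intro j _; exact Fin.ext (ZMod.val_natCast_of_lt (lt_trans j.isLt hMN))
    · intro a ha
      have haM : a.val < M := by simpa using ha
      rw [hhe', dif_pos haM, smul_eq_mul, ZMod.natCast_zmod_val, mul_comm]
  have key : ZMod.dft y = ZMod.dft y' := by
    funext k
    have h1 : ZMod.dft y k = ZMod.dft x k * ZMod.dft he' k
        * Complex.exp (2 * Real.pi * Complex.I * (k.val : ℂ) * (t : ℂ) / (N : ℂ)) := by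
      rw [← dft_eq_zmod, ← dft_eq_zmod, ← dft_eq_zmod]; exact hfreq k
    rw [h1, hphase k, hHsum k]
    -- compute the DFT of y'
    have h2 : ZMod.dft y' k
        = ZMod.dft x k * ∑ j : Fin M,
            h j * ZMod.stdAddChar ((((j.val : ℕ) : ZMod N) - (t : ZMod N)) * k) := by
      rw [ZMod.dft_apply]
      simp only [hy', smul_eq_mul, Finset.mul_sum]
      rw [Finset.sum_comm]
      refine Finset.sum_congr rfl fun j _ => ?_
      have harg : ∀ n : ZMod N,
          n - (t : ZMod N) + ((j.val : ℕ) : ZMod N)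
            = n + (((j.val : ℕ) : ZMod N) - (t : ZMod N)) := by intro n; ring
      calc ∑ n : ZMod N, ZMod.stdAddChar (-(n * k))
              * (h j * x (n - (t : ZMod N) + ((j.val : ℕ) : ZMod N)))
          = h j * ∑ n : ZMod N, ZMod.stdAddChar (-(n * k))
              * x (n + (((j.val : ℕ) : ZMod N) - (t : ZMod N))) := by
            rw [Finset.mul_sum]
            refine Finset.sum_congr rfl fun n _ => ?_
            rw [harg n]; ring
        _ = h j * (ZMod.stdAddChar ((((j.val : ℕ) : ZMod N) - (t : ZMod N)) * k)
              * ZMod.dft x k) := by rw [shift_sum]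
        _ = ZMod.dft x k * (h j
              * ZMod.stdAddChar ((((j.val : ℕ) : ZMod N) - (t : ZMod N)) * k)) := by ring
    -- now reindex the reversed kernel sum
    have h3 : (∑ j : Fin M, h' j * ZMod.stdAddChar (-(((j.val : ℕ) : ZMod N) * k)))
          * ZMod.stdAddChar (k * (t : ZMod N))
        = ∑ j : Fin M,
            h j * ZMod.stdAddChar ((((j.val : ℕ) : ZMod N) - (t : ZMod N)) * k) := by
      rw [Finset.sum_mul]
      rw [← Equiv.sum_comp (Fin.revPerm (n := M))
        (fun j : Fin M => h j * ZMod.stdAddChar ((((j.val : ℕ) : ZMod N) - (t : ZMod N)) * k))]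
      refine Finset.sum_congr rfl fun j _ => ?_
      simp only [Fin.revPerm_apply]
      have hj1 : j.val ≤ M - 1 := by omega
      have hrevval : (j.rev).val = M - 1 - j.val := by
        rw [Fin.val_rev]; omega
      have hh'j : h' j = h j.rev := by
        rw [hh' j]
        congr 1
        exact Fin.ext (by rw [hrevval])
      rw [hh'j]
      have hcast : (((j.rev.val : ℕ) : ZMod N)) = 2 * (t : ZMod N) - ((j.val : ℕ) : ZMod N) := by
        rw [hrevval, hM1]
        have : (2 * t - j.val : ℕ) = (2 * t : ℕ) - (j.val : ℕ) := rfl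
        push_cast [Nat.cast_sub (by omega : j.val ≤ 2 * t)]
        ring
      rw [mul_assoc, ← AddChar.map_add_eq_mul]
      congr 2
      rw [hcast]
      ring
    rw [h2, mul_assoc, h3]
  exact ZMod.dft.injective key
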